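/- arXiv:math/0008001 — 7 statements merged into one kernel-verified Lean document; each statement's English description precedes it below -/
import Mathlib

section
/- Let k be a positive integer and let α₁,…,α_{2k} and β₁,…,β_{2k} be real numbers such that αᵢ ≥ βᵢ for i = 1,…,k and αᵢ ≤ βᵢ for i = k+1,…,2k. Then there exist k orthonormal vectors ξ₁,…,ξ_k in ℂ^{2k} such that, letting a and b be the diagonal matrices with diagonals (αᵢ) and (βᵢ), we have ⟨aξᵢ, ξⱼ⟩ = ⟨bξᵢ, ξⱼ⟩ for all 1 ≤ i, j ≤ k, and moreover ⟨aξᵢ, ξⱼ⟩ = 0 whenever i ≠ j. -/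
/-!
Pair the coordinate `i < k`, where `α ≥ β`, with the coordinate `i + k`, where `α ≤ β`, and take
`ξᵢ = c eᵢ + s e_{i+k}` with `c² + s² = 1`. Then `⟪a ξᵢ, ξᵢ⟫ - ⟪b ξᵢ, ξᵢ⟫ = c² (αᵢ - βᵢ) - s² (β_{i+k} - α_{i+k})`,
a difference of two nonnegative weights that vanishes for a suitable choice of `c` and `s`. Distinct
`ξᵢ` have disjoint supports, which diagonal matrices preserve, so all off-diagonal entries vanish.
-/

open Matrix ComplexConjugate Function

theorem exists_sq_add_sq_eq_one_and_sq_mul_eq {x y : ℝ} (hx : 0 ≤ x) (hy : 0 ≤ y) :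
    ∃ c s : ℝ, c ^ 2 + s ^ 2 = 1 ∧ c ^ 2 * x = s ^ 2 * y := by
  rcases (add_nonneg hx hy).eq_or_lt with hxy | hxy
  · exact ⟨1, 0, by norm_num, by simp; linarith⟩
  · refine ⟨√(y / (x + y)), √(x / (x + y)), ?_, ?_⟩
    all_goals rw [Real.sq_sqrt (by positivity), Real.sq_sqrt (by positivity)]
    · field_simp
      ring
    · ring

section TwoPointVector

variable {ι : Type*} [DecidableEq ι]

noncomputable def twoPointVector (p q : ι) (c s : ℝ) : EuclideanSpace ℂ ι :=
  EuclideanSpace.single p (c : ℂ) + EuclideanSpace.single q (s : ℂ)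

theorem twoPointVector_apply (p q : ι) (c s : ℝ) (m : ι) :
    twoPointVector p q c s m = (if m = p then (c : ℂ) else 0) + if m = q then (s : ℂ) else 0 := by
  simp [twoPointVector]

variable [Fintype ι]

theorem toEuclideanLin_diagonal_single (d : ι → ℂ) (p : ι) (c : ℂ) :
    toEuclideanLin (diagonal d) (EuclideanSpace.single p c) =
      EuclideanSpace.single p (d p * c) := by
  ext m
  by_cases h : m = p <;> simp [toLpLin_apply, h, mul_comm]

theorem inner_toEuclideanLin_diagonal_twoPointVector (d : ι → ℂ) (p q : ι) (c s : ℝ)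
    (v : EuclideanSpace ℂ ι) :
    inner ℂ (toEuclideanLin (diagonal d) (twoPointVector p q c s)) v =
      conj (d p) * c * v p + conj (d q) * s * v q := by
  simp only [twoPointVector, map_add, toEuclideanLin_diagonal_single, inner_add_left,
    EuclideanSpace.inner_single_left, map_mul, Complex.conj_ofReal]

theorem inner_toEuclideanLin_diagonal_twoPointVector_of_disjoint (d : ι → ℂ)
    {p q p' q' : ι} (hpp' : p ≠ p') (hpq' : p ≠ q') (hqp' : q ≠ p') (hqq' : q ≠ q')
    (c s c' s' : ℝ) :
    inner ℂ (toEuclideanLin (diagonal d) (twoPointVector p q c s)) (twoPointVector p' q' c' s') =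
      0 := by
  simp [inner_toEuclideanLin_diagonal_twoPointVector, twoPointVector_apply, hpp', hpq', hqp', hqq']

theorem inner_toEuclideanLin_diagonal_twoPointVector_self (r : ι → ℝ) {p q : ι} (hpq : p ≠ q)
    (c s : ℝ) :
    inner ℂ (toEuclideanLin (diagonal fun m => (r m : ℂ)) (twoPointVector p q c s))
        (twoPointVector p q c s) = ((c ^ 2 * r p + s ^ 2 * r q : ℝ) : ℂ) := by
  simp [inner_toEuclideanLin_diagonal_twoPointVector, twoPointVector_apply, hpq, hpq.symm]
  ring

theorem exists_orthonormal_inner_toEuclideanLin_diagonal_eq {κ : Type*} {p q : κ → ι}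
    (hp : Injective p) (hq : Injective q) (hpq : ∀ i j, p i ≠ q j) {α β : ι → ℝ}
    (hαβ : ∀ i, β (p i) ≤ α (p i)) (hβα : ∀ i, α (q i) ≤ β (q i)) :
    ∃ ξ : κ → EuclideanSpace ℂ ι, Orthonormal ℂ ξ ∧
      (∀ i j, inner ℂ (toEuclideanLin (diagonal fun m => (α m : ℂ)) (ξ i)) (ξ j) =
        inner ℂ (toEuclideanLin (diagonal fun m => (β m : ℂ)) (ξ i)) (ξ j)) ∧
      ∀ i j, i ≠ j → inner ℂ (toEuclideanLin (diagonal fun m => (α m : ℂ)) (ξ i)) (ξ j) = 0 := by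
  choose c s hcs hbalance using fun i =>
    exists_sq_add_sq_eq_one_and_sq_mul_eq (sub_nonneg.2 (hαβ i)) (sub_nonneg.2 (hβα i))
  set ξ := fun i => twoPointVector (p i) (q i) (c i) (s i)
  have hoff : ∀ (d : ι → ℂ) i j, i ≠ j → inner ℂ (toEuclideanLin (diagonal d) (ξ i)) (ξ j) = 0 :=
    fun d i j hij => inner_toEuclideanLin_diagonal_twoPointVector_of_disjoint d
      (hp.ne hij) (hpq i j) (fun h => hpq j i h.symm) (hq.ne hij) _ _ _ _
  have hself (r : ι → ℝ) (i : κ) :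
      inner ℂ (toEuclideanLin (diagonal fun m => (r m : ℂ)) (ξ i)) (ξ i) =
        ((c i ^ 2 * r (p i) + s i ^ 2 * r (q i) : ℝ) : ℂ) :=
    inner_toEuclideanLin_diagonal_twoPointVector_self r (hpq i i) _ _
  -- Orthonormality is the case `d = 1` of the two computations above.
  have hid (v : EuclideanSpace ℂ ι) : toEuclideanLin (diagonal fun _ => ((1 : ℝ) : ℂ)) v = v := by
    simp
  classical
  refine ⟨ξ, orthonormal_iff_ite.2 fun i j => ?_, fun i j => ?_, fun i j => hoff _ i j⟩
  · rw [← hid (ξ i)]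
    obtain rfl | hij := eq_or_ne i j
    · rw [hself (fun _ => 1), if_pos rfl]
      exact_mod_cast by linear_combination hcs i
    · rw [hoff _ i j hij, if_neg hij]
  · obtain rfl | hij := eq_or_ne i j
    · rw [hself, hself]
      congr 1
      linear_combination hbalance i
    · rw [hoff _ i j hij, hoff _ i j hij]

end TwoPointVector

theorem stmt1_general (k : ℕ) (α β : Fin (2 * k) → ℝ)
    (h1 : ∀ i : Fin (2 * k), (i : ℕ) < k → α i ≥ β i)
    (h2 : ∀ i : Fin (2 * k), k ≤ (i : ℕ) → α i ≤ β i)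
    (a b : Matrix (Fin (2 * k)) (Fin (2 * k)) ℂ)
    (ha : a = Matrix.diagonal fun i => (α i : ℂ))
    (hb : b = Matrix.diagonal fun i => (β i : ℂ)) :
    ∃ ξ : Fin k → EuclideanSpace ℂ (Fin (2 * k)),
      Orthonormal ℂ ξ ∧
      (∀ i j : Fin k,
        (inner ℂ (Matrix.toEuclideanLin a (ξ i)) (ξ j) : ℂ) =
          (inner ℂ (Matrix.toEuclideanLin b (ξ i)) (ξ j) : ℂ)) ∧
      (∀ i j : Fin k, i ≠ j →
        (inner ℂ (Matrix.toEuclideanLin a (ξ i)) (ξ j) : ℂ) = 0) := by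
  subst ha hb
  let p (i : Fin k) : Fin (2 * k) := ⟨i, by omega⟩
  let q (i : Fin k) : Fin (2 * k) := ⟨i + k, by omega⟩
  exact exists_orthonormal_inner_toEuclideanLin_diagonal_eq (p := p) (q := q)
    (fun i j h => Fin.ext (by simpa [p] using congrArg Fin.val h))
    (fun i j h => Fin.ext (by simpa [q] using congrArg Fin.val h))
    (fun i j h => by have := congrArg Fin.val h; simp [p, q] at this; omega)
    (fun i => h1 _ i.2) (fun i => h2 _ (Nat.le_add_left k i))

theorem stmt1 (k : ℕ) (hk : 0 < k) (α β : Fin (2 * k) → ℝ)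
    (h1 : ∀ i : Fin (2 * k), (i : ℕ) < k → α i ≥ β i)
    (h2 : ∀ i : Fin (2 * k), k ≤ (i : ℕ) → α i ≤ β i)
    (a b : Matrix (Fin (2 * k)) (Fin (2 * k)) ℂ)
    (ha : a = Matrix.diagonal fun i => (α i : ℂ))
    (hb : b = Matrix.diagonal fun i => (β i : ℂ)) :
    ∃ ξ : Fin k → EuclideanSpace ℂ (Fin (2 * k)),
      Orthonormal ℂ ξ ∧
      (∀ i j : Fin k,
        (inner ℂ (Matrix.toEuclideanLin a (ξ i)) (ξ j) : ℂ) =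
          (inner ℂ (Matrix.toEuclideanLin b (ξ i)) (ξ j) : ℂ)) ∧
      (∀ i j : Fin k, i ≠ j →
        (inner ℂ (Matrix.toEuclideanLin a (ξ i)) (ξ j) : ℂ) = 0) :=
  stmt1_general k α β h1 h2 a b ha hb
end

section
/- If a is a self-adjoint 2k×2k complex matrix, then there exist orthonormal vectors ξ₁,…,ξ_k in ℂ^{2k} and a real number λ such that ⟨aξᵢ, ξⱼ⟩ = λ·δ_{ij} for all 1 ≤ i, j ≤ k; equivalently, the orthogonal projection p onto the span of ξ₁,…,ξ_k satisfies pap = λp. -/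
/-! Order the eigenvalues `λ₀ ≥ ⋯ ≥ λ_(2k-1)` of `a`, with orthonormal eigenvectors `vᵢ`.
For `i < k` the eigenvalue `λ_k` lies between `λ_(k+i)` and `λᵢ`, so
`λ_k = sᵢ² λᵢ + cᵢ² λ_(k+i)` with `sᵢ² + cᵢ² = 1`. The vectors `ξᵢ = sᵢ vᵢ + cᵢ v_(k+i)` are
orthonormal, `⟪a ξᵢ, ξᵢ⟫ = λ_k`, and `⟪a ξᵢ, ξⱼ⟫ = 0` for `i ≠ j` because the two pairs of
eigenvectors are disjoint. -/

open Module Set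

theorem exists_sq_add_sq_eq_one_of_mem_uIcc {a b l : ℝ} (hl : l ∈ uIcc a b) :
    ∃ s c : ℝ, s ^ 2 + c ^ 2 = 1 ∧ s ^ 2 * a + c ^ 2 * b = l := by
  rw [← segment_eq_uIcc] at hl
  obtain ⟨p, q, hp, hq, hpq, rfl⟩ := hl
  refine ⟨√p, √q, ?_, ?_⟩ <;> simp [Real.sq_sqrt, hp, hq, hpq]

namespace Orthonormal

variable {𝕜 E ι : Type*} [RCLike 𝕜] [NormedAddCommGroup E] [InnerProductSpace 𝕜 E]
  [DecidableEq ι] {u : ι ⊕ ι → E}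

open scoped ComplexConjugate InnerProductSpace

theorem inner_smul_add_smul_inl_inr (hu : Orthonormal 𝕜 u) (s c s' c' : 𝕜) (i j : ι) :
    ⟪s • u (.inl i) + c • u (.inr i), s' • u (.inl j) + c' • u (.inr j)⟫_𝕜 =
      if i = j then conj s * s' + conj c * c' else 0 := by
  simp only [inner_add_left, inner_add_right, inner_smul_left, inner_smul_right,
    orthonormal_iff_ite.mp hu, Sum.inl.injEq, Sum.inr.injEq, reduceCtorEq, if_false]
  split_ifs <;> ring

theorem exists_orthonormal_inner_apply_eq_ite {T : E →ₗ[𝕜] E} (hu : Orthonormal 𝕜 u)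
    {μ : ι ⊕ ι → ℝ} (hTu : ∀ x, T (u x) = (μ x : 𝕜) • u x) {l : ℝ}
    (hl : ∀ i, l ∈ uIcc (μ (.inl i)) (μ (.inr i))) :
    ∃ ξ : ι → E, Orthonormal 𝕜 ξ ∧
      ∀ i j, ⟪T (ξ i), ξ j⟫_𝕜 = if i = j then (l : 𝕜) else 0 := by
  choose s c hsc hl using fun i => exists_sq_add_sq_eq_one_of_mem_uIcc (hl i)
  refine ⟨fun i => (s i : 𝕜) • u (.inl i) + (c i : 𝕜) • u (.inr i), ?_, fun i j => ?_⟩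
  · refine orthonormal_iff_ite.mpr fun i j => ?_
    rw [hu.inner_smul_add_smul_inl_inr]
    split_ifs with h
    · subst h
      simp only [RCLike.conj_ofReal, ← sq]
      exact_mod_cast hsc i
    · rfl
  · simp only [map_add, map_smul, hTu, smul_smul, hu.inner_smul_add_smul_inl_inr]
    split_ifs with h
    · subst h
      rw [← hl]
      simp only [map_mul, RCLike.conj_ofReal]
      push_cast
      ring
    · rfl

end Orthonormal

namespace LinearMap.IsSymmetric

variable {𝕜 E : Type*} [RCLike 𝕜] [NormedAddCommGroup E] [InnerProductSpace 𝕜 E]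
  [FiniteDimensional 𝕜 E] {T : E →ₗ[𝕜] E}

open scoped InnerProductSpace

theorem exists_orthonormal_inner_apply_eq_ite (hT : T.IsSymmetric) {k : ℕ} (hk : 0 < k)
    (hkE : 2 * k ≤ finrank 𝕜 E) :
    ∃ ξ : Fin k → E, ∃ l : ℝ, Orthonormal 𝕜 ξ ∧
      ∀ i j, ⟪T (ξ i), ξ j⟫_𝕜 = if i = j then (l : 𝕜) else 0 := by
  let n := finrank 𝕜 E
  let e : Fin k ⊕ Fin k → Fin n := Fin.castLE (by omega) ∘ finSumFinEquiv
  have he : e.Injective := (Fin.castLE_injective _).comp finSumFinEquiv.injective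
  let m : Fin n := ⟨k, by omega⟩
  have hl : ∀ i, hT.eigenvalues rfl m ∈
      uIcc (hT.eigenvalues rfl (e (.inl i))) (hT.eigenvalues rfl (e (.inr i))) := fun i =>
    mem_uIcc_of_ge (hT.eigenvalues_antitone rfl (Fin.mk_le_mk.mpr (by simp)))
      (hT.eigenvalues_antitone rfl (Fin.mk_le_mk.mpr (by simp)))
  obtain ⟨ξ, hξ, hTξ⟩ := ((hT.eigenvectorBasis rfl).orthonormal.comp e he
    ).exists_orthonormal_inner_apply_eq_ite (fun x => hT.apply_eigenvectorBasis rfl (e x)) hl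
  exact ⟨ξ, _, hξ, hTξ⟩

end LinearMap.IsSymmetric

theorem stmt4 (k : ℕ) (hk : 0 < k) (a : Matrix (Fin (2 * k)) (Fin (2 * k)) ℂ)
    (ha : a.IsHermitian) :
    ∃ ξ : Fin k → EuclideanSpace ℂ (Fin (2 * k)), ∃ lam : ℝ,
      Orthonormal ℂ ξ ∧
      ∀ i j : Fin k,
        (inner ℂ (Matrix.toEuclideanLin a (ξ i)) (ξ j) : ℂ) =
          if i = j then (lam : ℂ) else 0 :=
  (Matrix.isSymmetric_toEuclideanLin_iff.mpr ha).exists_orthonormal_inner_apply_eq_ite hk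
    (by simp)
end

section
/- If a₁,…,a_n are injective bounded operators on an infinite-dimensional Hilbert space H such that each aᵢ is either positive or negative (i.e., aᵢ ≥ 0 or aᵢ ≤ 0 as an operator), and k is a positive integer, then there exist a projection p of rank k and nonzero real numbers t₂,…,t_n such that p a₁ p = t₂ p a₂ p = ⋯ = t_n p a_n p. -/
/-!
If `a` is self-adjoint and `b` strictly positive on a space of dimension `2k`, conjugating by
`b^(-1/2)` turns the pencil `a - t b` into `c - t` for a self-adjoint `c`. Sorting the eigenvalues
`ν₁ ≤ ⋯ ≤ ν₂ₖ` of `c` and taking `t = νₖ₊₁`, each pair `(νₛ, νₖ₊ₛ)` lies on either side of `t`,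
so the plane of the two eigenvectors contains a unit vector on which `⟪·, (c - t) ·⟫` vanishes;
these `k` vectors span a subspace on which the forms of `a` and `t b` agree.

Starting from a subspace of dimension `2ⁿk` and halving the dimension once for each `aᵢ`, we get
a `k`-dimensional `V` on which the form of `a₁` is `tᵢ` times that of `aᵢ` for every `i`, and `p`
is the orthogonal projection onto `V`. Each `tᵢ` is nonzero since `⟪x, a₁ x⟫ ≠ 0` for `x ≠ 0`.
-/

open scoped InnerProductSpace
open Module

theorem exists_sq_add_sq_eq_one_and_eq {μ ν t : ℝ} (hμ : μ ≤ t) (hν : t ≤ ν) :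
    ∃ c d : ℝ, c ^ 2 + d ^ 2 = 1 ∧ c ^ 2 * μ + d ^ 2 * ν = t := by
  rcases eq_or_lt_of_le (hμ.trans hν) with h | h
  · exact ⟨1, 0, by norm_num, by simp only [one_pow, one_mul]; linarith⟩
  · refine ⟨√((ν - t) / (ν - μ)), √((t - μ) / (ν - μ)), ?_, ?_⟩ <;>
      rw [Real.sq_sqrt (div_nonneg (by linarith) (by linarith)),
        Real.sq_sqrt (div_nonneg (by linarith) (by linarith))] <;>
      field_simp <;> ring

theorem exists_injective_sumElim_le_le {α : Type*} [LinearOrder α] [Nonempty α] {n k : ℕ}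
    (hk : 2 * k ≤ n) (f : Fin n → α) :
    ∃ (t : α) (lo hi : Fin k → Fin n), Function.Injective (Sum.elim lo hi) ∧
      ∀ s, f (lo s) ≤ t ∧ t ≤ f (hi s) := by
  rcases Nat.eq_zero_or_pos k with rfl | hk0
  · exact ⟨Classical.arbitrary α, Fin.elim0, Fin.elim0,
      fun x => by rcases x with x | x <;> exact x.elim0, fun s => s.elim0⟩
  set σ := Tuple.sort f
  refine ⟨f (σ ⟨k, by omega⟩), fun s => σ ⟨s, by omega⟩, fun s => σ ⟨k + s, by omega⟩, ?_,
    fun s => ⟨Tuple.monotone_sort f (Fin.mk_le_mk.2 (by omega)),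
      Tuple.monotone_sort f (Fin.mk_le_mk.2 (by omega))⟩⟩
  rintro (r | r) (s | s) h <;> simp only [Sum.elim_inl, Sum.elim_inr, σ.injective.eq_iff,
    Fin.mk.injEq, Sum.inl.injEq, Sum.inr.injEq, reduceCtorEq] at h ⊢ <;> omega

theorem exists_submodule_finrank_eq_of_not_finiteDimensional {K V : Type*} [DivisionRing K]
    [AddCommGroup V] [Module K V] (hV : ¬ FiniteDimensional K V) (k : ℕ) :
    ∃ W : Submodule K V, FiniteDimensional K W ∧ finrank K W = k := by
  have hk : (k : Cardinal) ≤ Module.rank K V :=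
    (Cardinal.natCast_lt_aleph0.trans_le (not_lt.1 (mt Module.rank_lt_aleph0_iff.1 hV))).le
  obtain ⟨f, hf⟩ := exists_linearIndependent_of_le_rank hk
  exact ⟨Submodule.span K (Set.range f), FiniteDimensional.span_of_finite K (Set.finite_range f),
    by rw [finrank_span_eq_card hf, Fintype.card_fin]⟩

section RCLike

variable {𝕜 E : Type*} [RCLike 𝕜] [NormedAddCommGroup E] [InnerProductSpace 𝕜 E]

theorem inner_map_eq_mul_inner_of_mem_span {ι : Type*} {T : E →ₗ[𝕜] E} {t : 𝕜} {w : ι → E}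
    (hw : ∀ r s, ⟪w r, T (w s)⟫_𝕜 = t * ⟪w r, w s⟫_𝕜) {x y : E}
    (hx : x ∈ Submodule.span 𝕜 (Set.range w)) (hy : y ∈ Submodule.span 𝕜 (Set.range w)) :
    ⟪x, T y⟫_𝕜 = t * ⟪x, y⟫_𝕜 := by
  have hortho : Submodule.span 𝕜 (Set.range w) ⟂
      (Submodule.span 𝕜 (Set.range w)).map (T - t • LinearMap.id) := by
    rw [Submodule.map_span, Submodule.isOrtho_span]
    rintro _ ⟨r, rfl⟩ _ ⟨_, ⟨s, rfl⟩, rfl⟩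
    simp [inner_sub_right, inner_smul_right, hw]
  have := Submodule.isOrtho_iff_inner_eq.1 hortho x hx _ (Submodule.mem_map_of_mem hy)
  simpa [inner_sub_right, inner_smul_right, sub_eq_zero] using this

theorem Orthonormal.exists_orthonormal_inner_map_eq_mul_inner {ι : Type*} {v : ι → E}
    (hv : Orthonormal 𝕜 v) {T : E →ₗ[𝕜] E} {ν : ι → ℝ} (hTv : ∀ i, T (v i) = (ν i : 𝕜) • v i)
    {k : ℕ} {lo hi : Fin k → ι} (hinj : Function.Injective (Sum.elim lo hi)) {t : ℝ}
    (hle : ∀ s, ν (lo s) ≤ t ∧ t ≤ ν (hi s)) :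
    ∃ w : Fin k → E, Orthonormal 𝕜 w ∧ ∀ r s, ⟪w r, T (w s)⟫_𝕜 = t * ⟪w r, w s⟫_𝕜 := by
  classical
  choose c d hcd hcomb using fun s => exists_sq_add_sq_eq_one_and_eq (hle s).1 (hle s).2
  have hlo : ∀ r s, lo r = lo s ↔ r = s := fun r s =>
    (hinj.eq_iff (a := .inl r) (b := .inl s)).trans Sum.inl_injective.eq_iff
  have hhi : ∀ r s, hi r = hi s ↔ r = s := fun r s =>
    (hinj.eq_iff (a := .inr r) (b := .inr s)).trans Sum.inr_injective.eq_iff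
  have hlohi : ∀ r s, lo r ≠ hi s := fun r s h => Sum.inl_ne_inr (hinj h)
  have hhilo : ∀ r s, hi r ≠ lo s := fun r s h => hlohi s r h.symm
  have hv' := orthonormal_iff_ite.1 hv
  -- distinct `w r`, `w s` are built from disjoint pairs of eigenvectors, so both forms vanish
  -- between them; on the diagonal `⟪w s, T (w s)⟫ = c² ν (lo s) + d² ν (hi s) = t`
  set w : Fin k → E := fun s => (c s : 𝕜) • v (lo s) + (d s : 𝕜) • v (hi s)
  have hTw : ∀ s, T (w s) =
      (c s * ν (lo s) : 𝕜) • v (lo s) + (d s * ν (hi s) : 𝕜) • v (hi s) := by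
    intro s
    simp only [w, map_add, map_smul, hTv, smul_smul]
  have hw : ∀ r s, ⟪w r, w s⟫_𝕜 = if r = s then 1 else 0 := by
    intro r s
    by_cases hrs : r = s
    · subst hrs
      simp only [w, inner_add_left, inner_add_right, inner_smul_left, inner_smul_right, hv',
        if_pos, if_neg (hlohi r r), if_neg (hhilo r r), RCLike.conj_ofReal]
      have h := congrArg ((↑) : ℝ → 𝕜) (hcd r)
      push_cast at h
      linear_combination h
    · simp [w, inner_add_left, inner_add_right, inner_smul_left, inner_smul_right, hv', hlohi,
        hhilo, hlo, hhi, hrs]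
  refine ⟨w, orthonormal_iff_ite.2 hw, fun r s => ?_⟩
  rw [hTw, hw]
  by_cases hrs : r = s
  · subst hrs
    simp only [w, inner_add_left, inner_add_right, inner_smul_left, inner_smul_right, hv',
      if_pos, if_neg (hlohi r r), if_neg (hhilo r r), RCLike.conj_ofReal]
    rw [← hcomb r]
    push_cast
    ring
  · simp [w, inner_add_left, inner_add_right, inner_smul_left, inner_smul_right, hv', hlohi,
      hhilo, hlo, hhi, hrs]

theorem LinearMap.IsSymmetric.exists_finrank_eq_inner_map_eq [FiniteDimensional 𝕜 E]
    {T : E →ₗ[𝕜] E} (hT : T.IsSymmetric) {k : ℕ} (hk : 2 * k ≤ finrank 𝕜 E) :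
    ∃ (t : ℝ) (W : Submodule 𝕜 E), finrank 𝕜 W = k ∧
      ∀ x ∈ W, ∀ y ∈ W, ⟪x, T y⟫_𝕜 = t * ⟪x, y⟫_𝕜 := by
  obtain ⟨t, lo, hi, hinj, hle⟩ := exists_injective_sumElim_le_le hk (hT.eigenvalues rfl)
  obtain ⟨w, hw, hTw⟩ := (hT.eigenvectorBasis rfl).orthonormal
    |>.exists_orthonormal_inner_map_eq_mul_inner (hT.apply_eigenvectorBasis rfl) hinj hle
  refine ⟨t, Submodule.span 𝕜 (Set.range w), ?_, fun x hx y hy =>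
    inner_map_eq_mul_inner_of_mem_span hTw hx hy⟩
  rw [finrank_span_eq_card hw.linearIndependent, Fintype.card_fin]

theorem Submodule.starProjection_comp_comp_eq_smul (V : Submodule 𝕜 E)
    [V.HasOrthogonalProjection] {a b : E →L[𝕜] E} {c : 𝕜}
    (h : ∀ x ∈ V, ∀ y ∈ V, ⟪x, a y⟫_𝕜 = c * ⟪x, b y⟫_𝕜) :
    V.starProjection ∘L a ∘L V.starProjection =
      c • (V.starProjection ∘L b ∘L V.starProjection) := by
  ext x
  refine ext_inner_left 𝕜 fun z => ?_
  simp only [ContinuousLinearMap.comp_apply, smul_apply, inner_smul_right,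
    ← inner_starProjection_left_eq_right]
  exact h _ (V.starProjection_apply_mem z) _ (V.starProjection_apply_mem x)

end RCLike

section Complex

variable {E : Type*} [NormedAddCommGroup E] [InnerProductSpace ℂ E]

theorem IsSelfAdjoint.exists_finrank_eq_inner_map_eq_mul_inner_map [FiniteDimensional ℂ E]
    {A B : E →L[ℂ] E} (hA : IsSelfAdjoint A) (hB : IsStrictlyPositive B) {k : ℕ}
    (hk : 2 * k ≤ finrank ℂ E) :
    ∃ (t : ℝ) (W : Submodule ℂ E), finrank ℂ W = k ∧
      ∀ x ∈ W, ∀ y ∈ W, ⟪x, A y⟫_ℂ = t * ⟪x, B y⟫_ℂ := by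
  set S := CFC.sqrt B
  set R := Ring.inverse S
  have hSS : S * S = B := CFC.sqrt_mul_sqrt_self B hB.nonneg
  have hSR : S * R = 1 := Ring.mul_inverse_cancel S hB.isUnit_cfcSqrt
  have hS : IsSelfAdjoint S := hB.sqrt.isSelfAdjoint
  have hR : IsSelfAdjoint R := hB.sqrt.ringInverse.isSelfAdjoint
  have hC : IsSelfAdjoint (R * A * R) := by simpa only [hR.star_eq] using hA.conjugate R
  obtain ⟨t, W, hW, hWt⟩ :=
    (ContinuousLinearMap.isSelfAdjoint_iff_isSymmetric.1 hC).exists_finrank_eq_inner_map_eq hk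
  have hSRx : ∀ z, S (R z) = z := fun z => by
    rw [← mul_apply_eq_comp, hSR, one_apply_eq_self]
  refine ⟨t, W.map (R : E →ₗ[ℂ] E), ?_, ?_⟩
  · rw [← hW]
    exact (Submodule.equivMapOfInjective _ (Function.LeftInverse.injective hSRx) W).finrank_eq.symm
  · rintro _ ⟨x, hx, rfl⟩ _ ⟨y, hy, rfl⟩
    calc ⟪R x, A (R y)⟫_ℂ = ⟪x, (R * A * R) y⟫_ℂ := hR.isSymmetric x _
      _ = t * ⟪x, y⟫_ℂ := hWt x hx y hy
      _ = t * ⟪S (R x), S (R y)⟫_ℂ := by rw [hSRx, hSRx]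
      _ = t * ⟪R x, (S * S) (R y)⟫_ℂ := congrArg _ (hS.isSymmetric _ _)
      _ = t * ⟪R x, B (R y)⟫_ℂ := by rw [hSS]

variable [CompleteSpace E]

theorem ContinuousLinearMap.IsPositive.apply_eq_zero_of_inner_eq_zero {T : E →L[ℂ] E}
    (hT : T.IsPositive) {x : E} (hx : ⟪x, T x⟫_ℂ = 0) : T x = 0 := by
  obtain ⟨S, rfl⟩ :=
    CStarAlgebra.nonneg_iff_eq_star_mul_self.1 ((ContinuousLinearMap.nonneg_iff_isPositive T).2 hT)
  have hSx : S x = 0 := by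
    rwa [mul_apply_eq_comp, ContinuousLinearMap.star_eq_adjoint,
      ContinuousLinearMap.adjoint_inner_right, inner_self_eq_zero] at hx
  rw [mul_apply_eq_comp, hSx, map_zero]

theorem ContinuousLinearMap.inner_map_self_ne_zero {T : E →L[ℂ] E}
    (hT : T.IsPositive ∨ (-T).IsPositive) (hinj : Function.Injective T) {x : E} (hx : x ≠ 0) :
    ⟪x, T x⟫_ℂ ≠ 0 := by
  intro h
  refine hx (hinj ?_)
  rw [map_zero]
  rcases hT with hT | hT
  · exact hT.apply_eq_zero_of_inner_eq_zero h
  · simpa using hT.apply_eq_zero_of_inner_eq_zero (by simpa [inner_neg_right] using h)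

theorem Submodule.exists_le_finrank_eq_inner_map_eq_mul_inner_map (V : Submodule ℂ E)
    [FiniteDimensional ℂ V] {a b : E →L[ℂ] E} (ha : IsSelfAdjoint a) (hb : b.IsPositive)
    (hinj : Function.Injective b) {k : ℕ} (hk : 2 * k ≤ finrank ℂ V) :
    ∃ (t : ℝ) (W : Submodule ℂ E), W ≤ V ∧ finrank ℂ W = k ∧
      ∀ x ∈ W, ∀ y ∈ W, ⟪x, a y⟫_ℂ = t * ⟪x, b y⟫_ℂ := by
  set ι := V.subtypeL
  have hcompr : ∀ (c : E →L[ℂ] E) (x y : V),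
      ⟪x, (ContinuousLinearMap.adjoint ι ∘L c ∘L ι) y⟫_ℂ = ⟪(x : E), c y⟫_ℂ :=
    fun c x y => ContinuousLinearMap.adjoint_inner_right ι x (c (ι y))
  have hBinj : Function.Injective (ContinuousLinearMap.adjoint ι ∘L b ∘L ι) := by
    refine (injective_iff_map_eq_zero _).2 fun x hx => ?_
    have h := hcompr b x x
    rw [hx, inner_zero_right] at h
    exact Subtype.ext <| hinj <| by
      rw [hb.apply_eq_zero_of_inner_eq_zero h.symm, V.coe_zero, map_zero]
  have hB : IsStrictlyPositive (ContinuousLinearMap.adjoint ι ∘L b ∘L ι) :=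
    (ContinuousLinearMap.isUnit_iff_bijective.2
      ⟨hBinj, LinearMap.injective_iff_surjective.1 hBinj⟩).isStrictlyPositive
      ((ContinuousLinearMap.nonneg_iff_isPositive _).2 (hb.adjoint_conj ι))
  obtain ⟨t, W, hW, hWt⟩ :=
    (ha.adjoint_conj ι).exists_finrank_eq_inner_map_eq_mul_inner_map hB hk
  refine ⟨t, W.map V.subtype, Submodule.map_subtype_le V W, ?_, ?_⟩
  · rw [Submodule.finrank_map_subtype_eq, hW]
  · rintro _ ⟨x, hx, rfl⟩ _ ⟨y, hy, rfl⟩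
    simpa only [hcompr, Submodule.subtype_apply] using hWt x hx y hy

theorem exists_finrank_eq_forall_inner_map_eq_mul_inner_map (hE : ¬ FiniteDimensional ℂ E)
    {ι : Type*} {a : E →L[ℂ] E} (ha : IsSelfAdjoint a) {b : ι → E →L[ℂ] E}
    (hinj : ∀ i, Function.Injective (b i)) (hpn : ∀ i, (b i).IsPositive ∨ (-(b i)).IsPositive)
    (s : Finset ι) (k : ℕ) :
    ∃ (V : Submodule ℂ E) (t : ι → ℝ), FiniteDimensional ℂ V ∧ finrank ℂ V = k ∧
      ∀ i ∈ s, ∀ x ∈ V, ∀ y ∈ V, ⟪x, a y⟫_ℂ = t i * ⟪x, b i y⟫_ℂ := by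
  classical
  induction s using Finset.induction_on generalizing k with
  | empty =>
    obtain ⟨V, hVfin, hV⟩ := exists_submodule_finrank_eq_of_not_finiteDimensional hE k
    exact ⟨V, 0, hVfin, hV, by simp⟩
  | insert i s _ ih =>
    obtain ⟨V, t, hVfin, hV, hVt⟩ := ih (2 * k)
    obtain ⟨tᵢ, W, hWV, hW, hWt⟩ : ∃ (tᵢ : ℝ) (W : Submodule ℂ E), W ≤ V ∧ finrank ℂ W = k ∧
        ∀ x ∈ W, ∀ y ∈ W, ⟪x, a y⟫_ℂ = tᵢ * ⟪x, b i y⟫_ℂ := by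
      rcases hpn i with hb | hb
      · exact V.exists_le_finrank_eq_inner_map_eq_mul_inner_map ha hb (hinj i) hV.ge
      · obtain ⟨tᵢ, W, hWV, hW, hWt⟩ := V.exists_le_finrank_eq_inner_map_eq_mul_inner_map ha hb
          (neg_injective.comp (hinj i)) hV.ge
        exact ⟨-tᵢ, W, hWV, hW, fun x hx y hy => by simpa [inner_neg_right] using hWt x hx y hy⟩
    refine ⟨W, Function.update t i tᵢ, Submodule.finiteDimensional_of_le hWV, hW, ?_⟩
    intro j hj x hx y hy
    rcases Finset.mem_insert.1 hj with rfl | hj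
    · simpa using hWt x hx y hy
    · rw [Function.update_of_ne (by rintro rfl; contradiction)]
      exact hVt j hj x (hWV hx) y (hWV hy)

end Complex

theorem stmt6 {H : Type*} [NormedAddCommGroup H] [InnerProductSpace ℂ H]
    [CompleteSpace H] (hH : ¬ FiniteDimensional ℂ H)
    (n : ℕ) (hn : 0 < n) (a : Fin n → H →L[ℂ] H)
    (hinj : ∀ i, Function.Injective (a i))
    (hpn : ∀ i, (a i).IsPositive ∨ (-(a i)).IsPositive)
    (k : ℕ) (hk : 0 < k) :
    ∃ (p : H →L[ℂ] H) (t : Fin n → ℝ),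
      IsIdempotentElem p ∧ IsSelfAdjoint p ∧
      Module.finrank ℂ (LinearMap.range (p : H →ₗ[ℂ] H)) = k ∧
      ∀ i : Fin n, i ≠ ⟨0, hn⟩ →
        t i ≠ 0 ∧ p ∘L a ⟨0, hn⟩ ∘L p = (t i : ℂ) • (p ∘L a i ∘L p) := by
  set a₀ := a ⟨0, hn⟩
  have ha₀ : IsSelfAdjoint a₀ := (hpn _).elim (·.isSelfAdjoint) fun h => by
    simpa using h.isSelfAdjoint.neg
  obtain ⟨V, t, hVfin, hV, hVt⟩ :=
    exists_finrank_eq_forall_inner_map_eq_mul_inner_map hH ha₀ hinj hpn Finset.univ k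
  obtain ⟨x, hx, hx0⟩ := Submodule.exists_mem_ne_zero_of_ne_bot
    (Submodule.one_le_finrank_iff.1 (show 1 ≤ finrank ℂ V by omega))
  refine ⟨V.starProjection, t, V.isIdempotentElem_starProjection, isSelfAdjoint_starProjection V,
    by rw [Submodule.range_starProjection, hV], fun i _ => ⟨fun ht => ?_,
      V.starProjection_comp_comp_eq_smul (hVt i (Finset.mem_univ i))⟩⟩
  refine a₀.inner_map_self_ne_zero (hpn _) (hinj _) hx0 ?_
  rw [hVt i (Finset.mem_univ i) x hx x hx, ht, Complex.ofReal_zero, zero_mul]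
end

section
/- The joint essential numerical range W_e(x₁,…,x_n) of bounded operators x₁,…,x_n on a separable infinite-dimensional Hilbert space is a convex subset of ℂⁿ, and if each xᵢ is self-adjoint then W_e(x₁,…,x_n) ⊆ ℝⁿ. -/
open scoped ComplexOrder

/-- A singular state on `B(H)`: a norm-one positive linear functional
vanishing on all compact operators. -/
def IsSingularState {H : Type*} [NormedAddCommGroup H] [InnerProductSpace ℂ H]
    [CompleteSpace H] (f : (H →L[ℂ] H) →L[ℂ] ℂ) : Prop :=
  ‖f‖ = 1 ∧ (∀ a : H →L[ℂ] H, 0 ≤ f (star a * a)) ∧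
    ∀ a : H →L[ℂ] H, IsCompactOperator (⇑a) → f a = 0

/-- The joint essential numerical range of an `n`-tuple of bounded operators. -/
def jointEssNumRange {H : Type*} [NormedAddCommGroup H] [InnerProductSpace ℂ H]
    [CompleteSpace H] {n : ℕ} (x : Fin n → H →L[ℂ] H) :
    Set (EuclideanSpace ℂ (Fin n)) :=
  {v | ∃ f : (H →L[ℂ] H) →L[ℂ] ℂ, IsSingularState f ∧ ∀ i, f (x i) = v i}

/-!
A positive functional `f` on a unital C⋆-algebra satisfies `‖f‖ = f 1`: Cauchy–Schwarz for the
GNS semi-inner product `⟪a, b⟫ = f (star a * b)` gives `‖f a‖² ≤ f 1 * f (star a * a)`.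
Hence singular states are the positive functionals vanishing on compacts with `f 1 = 1`, a convex
set whose image under `f ↦ (f (x i))ᵢ` is the joint essential numerical range. A self-adjoint `a`
is `a⁺ - a⁻`, so `f a` is real.
-/

open scoped InnerProductSpace

namespace ContinuousLinearMap

variable {A : Type*} [CStarAlgebra A] [PartialOrder A] [StarOrderedRing A]
  {f : A →L[ℂ] ℂ}

lemma map_nonneg_of_star_mul_self (hf : ∀ a, 0 ≤ f (star a * a)) {a : A} (ha : 0 ≤ a) :
    0 ≤ f a := by
  obtain ⟨b, rfl⟩ := CStarAlgebra.nonneg_iff_eq_star_mul_self.mp ha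
  exact hf b

noncomputable def toPositiveLinearMap (f : A →L[ℂ] ℂ) (hf : ∀ a, 0 ≤ f (star a * a)) :
    A →ₚ[ℂ] ℂ :=
  .mk₀ f.toLinearMap fun _ ↦ map_nonneg_of_star_mul_self hf

@[simp]
lemma toPositiveLinearMap_apply (hf : ∀ a, 0 ≤ f (star a * a)) (a : A) :
    f.toPositiveLinearMap hf a = f a :=
  rfl

lemma norm_apply_sq_le (hf : ∀ a, 0 ≤ f (star a * a)) (a : A) :
    ‖f a‖ ^ 2 ≤ ‖f 1‖ * ‖f (star a * a)‖ := by
  set p := f.toPositiveLinearMap hf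
  have hnorm (b : A) : ‖p.toPreGNS b‖ ^ 2 = ‖f (star b * b)‖ := by
    simpa [p] using congrArg norm (p.preGNS_norm_sq (p.toPreGNS b))
  have hinner : ⟪p.toPreGNS 1, p.toPreGNS a⟫_ℂ = f a := by
    simp [p, PositiveLinearMap.preGNS_inner_def]
  calc ‖f a‖ ^ 2 ≤ (‖p.toPreGNS 1‖ * ‖p.toPreGNS a‖) ^ 2 := by
        rw [← hinner]; gcongr; exact norm_inner_le_norm _ _
    _ = ‖f 1‖ * ‖f (star a * a)‖ := by rw [mul_pow, hnorm, hnorm, star_one, one_mul]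

lemma norm_le_norm_apply_one (hf : ∀ a, 0 ≤ f (star a * a)) : ‖f‖ ≤ ‖f 1‖ := by
  have hbound (a : A) : ‖f a‖ ≤ √(‖f 1‖ * ‖f‖) * ‖a‖ := by
    rw [← Real.sqrt_sq (norm_nonneg a), ← Real.sqrt_mul (by positivity)]
    refine Real.le_sqrt_of_sq_le ((norm_apply_sq_le hf a).trans ?_)
    calc ‖f 1‖ * ‖f (star a * a)‖ ≤ ‖f 1‖ * (‖f‖ * ‖star a * a‖) := by
          gcongr; exact f.le_opNorm _
      _ = ‖f 1‖ * ‖f‖ * ‖a‖ ^ 2 := by rw [CStarRing.norm_star_mul_self, sq, mul_assoc]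
  have hsq : ‖f‖ ^ 2 ≤ ‖f 1‖ * ‖f‖ :=
    (Real.le_sqrt (norm_nonneg f) (by positivity)).mp (f.opNorm_le_bound (by positivity) hbound)
  nlinarith [norm_nonneg f, norm_nonneg (f 1)]

lemma apply_one_eq_norm (hf : ∀ a, 0 ≤ f (star a * a)) : f 1 = ‖f‖ := by
  obtain hA | hA := subsingleton_or_nontrivial A
  · simp [Subsingleton.elim (1 : A) 0, f.opNorm_subsingleton]
  have hone : 0 ≤ f 1 := by simpa using hf 1
  rw [Complex.eq_coe_norm_of_nonneg hone]
  congr 1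
  exact le_antisymm (by simpa using f.le_opNorm 1) (norm_le_norm_apply_one hf)

lemma im_apply_eq_zero_of_isSelfAdjoint (hf : ∀ a, 0 ≤ f (star a * a)) {a : A}
    (ha : IsSelfAdjoint a) : (f a).im = 0 := by
  have hpos := map_nonneg_of_star_mul_self hf (CFC.posPart_nonneg a)
  have hneg := map_nonneg_of_star_mul_self hf (CFC.negPart_nonneg a)
  rw [← CFC.posPart_sub_negPart a ha, map_sub, Complex.sub_im, ← Complex.le_def.mp hpos |>.2,
    ← (Complex.le_def.mp hneg).2, sub_self]

end ContinuousLinearMap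

section SingularState

variable {H : Type*} [NormedAddCommGroup H] [InnerProductSpace ℂ H] [CompleteSpace H]

lemma IsSingularState.apply_one {f : (H →L[ℂ] H) →L[ℂ] ℂ} (hf : IsSingularState f) : f 1 = 1 := by
  simpa [hf.1] using f.apply_one_eq_norm hf.2.1

lemma convex_setOf_isSingularState : Convex ℝ {f : (H →L[ℂ] H) →L[ℂ] ℂ | IsSingularState f} := by
  intro f hf g hg t s ht hs hts
  have hpos (a : H →L[ℂ] H) : 0 ≤ (t • f + s • g) (star a * a) :=
    add_nonneg (smul_nonneg ht (hf.2.1 a)) (smul_nonneg hs (hg.2.1 a))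
  refine ⟨?_, hpos, fun a ha ↦ by simp [hf.2.2 a ha, hg.2.2 a ha]⟩
  rw [← Complex.ofReal_inj, ← ContinuousLinearMap.apply_one_eq_norm hpos]
  simp [hf.apply_one, hg.apply_one, ← Complex.ofReal_add, hts]

lemma convex_jointEssNumRange {n : ℕ} (x : Fin n → H →L[ℂ] H) :
    Convex ℝ (jointEssNumRange x) := by
  rintro v ⟨f, hf, hfv⟩ w ⟨g, hg, hgw⟩ t s ht hs hts
  exact ⟨t • f + s • g, convex_setOf_isSingularState hf hg ht hs hts,
    fun i ↦ by simp [hfv, hgw]⟩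

lemma im_eq_zero_of_mem_jointEssNumRange {n : ℕ} {x : Fin n → H →L[ℂ] H}
    (hx : ∀ i, IsSelfAdjoint (x i)) {v : EuclideanSpace ℂ (Fin n)}
    (hv : v ∈ jointEssNumRange x) (i : Fin n) : (v i).im = 0 := by
  obtain ⟨f, hf, hfv⟩ := hv
  rw [← hfv i]
  exact f.im_apply_eq_zero_of_isSelfAdjoint hf.2.1 (hx i)

end SingularState

theorem stmt8_general {H : Type*} [NormedAddCommGroup H] [InnerProductSpace ℂ H]
    [CompleteSpace H]
    (n : ℕ) (x : Fin n → H →L[ℂ] H) :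
    Convex ℝ (jointEssNumRange x) ∧
      ((∀ i, IsSelfAdjoint (x i)) →
        ∀ v ∈ jointEssNumRange x, ∀ i, (v i).im = 0) :=
  ⟨convex_jointEssNumRange x, fun hx _ hv ↦ im_eq_zero_of_mem_jointEssNumRange hx hv⟩

theorem stmt8 {H : Type*} [NormedAddCommGroup H] [InnerProductSpace ℂ H]
    [CompleteSpace H] [TopologicalSpace.SeparableSpace H]
    (hH : ¬ FiniteDimensional ℂ H)
    (n : ℕ) (x : Fin n → H →L[ℂ] H) :
    Convex ℝ (jointEssNumRange x) ∧
      ((∀ i, IsSelfAdjoint (x i)) →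
        ∀ v ∈ jointEssNumRange x, ∀ i, (v i).im = 0) :=
  stmt8_general n x
end

section
/- Let S = conv(v₁,…,v_{n+1}) and S′ = conv(v₁′,…,v_{n+1}′) be n-simplices in ℝⁿ, and let ε > 0. If ‖vᵢ − vᵢ′‖ < ε for all i = 1,…,n+1, then S′ contains the ε-interior of S, i.e., every point v such that the closed ε-ball around v is contained in S also lies in S′. -/
/-!
Each vertex `v i` lies in the convex set `conv(v') + B(0, ε)`, hence so does `conv(v)`. If `x` were
outside the closed convex set `conv(v')`, a functional `f` separating `x` from `conv(v')` would be
bounded on `conv(v') + B(0, ε)` by `u + ε‖f‖` with `u < f x`, while on `B(x, ε)` it gets arbitrarily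
close to `f x + ε‖f‖`; so `B(x, ε)` cannot lie in `conv(v)`.
-/

open Metric Set Pointwise

variable {E : Type*} [NormedAddCommGroup E] [NormedSpace ℝ E]

theorem ContinuousLinearMap.exists_mem_closedBall_lt_apply (f : E →L[ℝ] ℝ) {x : E} {ε c : ℝ}
    (hε : 0 ≤ ε) (hc : c < f x + ε * ‖f‖) : ∃ y ∈ closedBall x ε, c < f y := by
  rcases hε.eq_or_lt with rfl | hε
  · exact ⟨x, mem_closedBall_self le_rfl, by simpa using hc⟩
  obtain ⟨z, hz, hfz⟩ := f.exists_lt_apply_of_lt_opNorm (r := (c - f x) / ε)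
    (by rw [div_lt_iff₀ hε]; linarith)
  obtain ⟨w, hwz, hfw⟩ : ∃ w : E, ‖w‖ = ‖z‖ ∧ f w = ‖f z‖ := by
    rcases le_total 0 (f z) with h | h
    · exact ⟨z, rfl, (Real.norm_of_nonneg h).symm⟩
    · exact ⟨-z, norm_neg z, by simp [Real.norm_of_nonpos h]⟩
  refine ⟨x + ε • w, ?_, ?_⟩
  · rw [mem_closedBall, dist_self_add_left, norm_smul, Real.norm_of_nonneg hε.le, hwz]
    nlinarith
  · rw [map_add, map_smul, smul_eq_mul, hfw]
    rw [div_lt_iff₀ hε] at hfz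
    linarith

theorem mem_of_closedBall_subset_add_closedBall {K : Set E} (hconv : Convex ℝ K)
    (hclosed : IsClosed K) {x : E} {ε : ℝ} (hε : 0 ≤ ε)
    (hball : closedBall x ε ⊆ K + closedBall (0 : E) ε) : x ∈ K := by
  by_contra hx
  obtain ⟨f, u, hfK, hux⟩ := geometric_hahn_banach_closed_point hconv hclosed hx
  have hbound : ∀ p ∈ K + closedBall (0 : E) ε, f p < u + ε * ‖f‖ := by
    rintro _ ⟨a, ha, b, hb, rfl⟩
    have hfb : f b ≤ ε * ‖f‖ := calc
      f b ≤ ‖f‖ * ‖b‖ := (le_abs_self _).trans (f.le_opNorm b)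
      _ ≤ ‖f‖ * ε := by gcongr; exact mem_closedBall_zero_iff.mp hb
      _ = ε * ‖f‖ := mul_comm _ _
    rw [map_add]
    linarith [hfK a ha]
  obtain ⟨y, hy, hfy⟩ := f.exists_mem_closedBall_lt_apply hε (c := u + ε * ‖f‖) (by linarith)
  exact (hbound y (hball hy)).not_gt hfy

theorem convexHull_range_subset_add_closedBall {ι : Type*} {v v' : ι → E} {ε : ℝ}
    (hclose : ∀ i, ‖v i - v' i‖ ≤ ε) :
    convexHull ℝ (range v) ⊆ convexHull ℝ (range v') + closedBall (0 : E) ε := by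
  refine convexHull_min ?_ ((convex_convexHull ℝ _).add (convex_closedBall 0 ε))
  rintro _ ⟨i, rfl⟩
  exact ⟨v' i, subset_convexHull ℝ _ ⟨i, rfl⟩, v i - v' i, mem_closedBall_zero_iff.mpr (hclose i),
    add_sub_cancel _ _⟩

theorem stmt13_general (n : ℕ) (v v' : Fin (n + 1) → EuclideanSpace ℝ (Fin n))
    (ε : ℝ) (hε : 0 < ε)
    (hclose : ∀ i, ‖v i - v' i‖ < ε) :
    ∀ x : EuclideanSpace ℝ (Fin n),
      Metric.closedBall x ε ⊆ convexHull ℝ (Set.range v) →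
      x ∈ convexHull ℝ (Set.range v') := fun _ hx =>
  mem_of_closedBall_subset_add_closedBall (convex_convexHull ℝ _)
    ((finite_range v').isCompact_convexHull ℝ).isClosed hε.le
    (hx.trans (convexHull_range_subset_add_closedBall fun i => (hclose i).le))

theorem stmt13 (n : ℕ) (v v' : Fin (n + 1) → EuclideanSpace ℝ (Fin n))
    (hS : (interior (convexHull ℝ (Set.range v))).Nonempty)
    (hS' : (interior (convexHull ℝ (Set.range v'))).Nonempty)
    (ε : ℝ) (hε : 0 < ε)
    (hclose : ∀ i, ‖v i - v' i‖ < ε) :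
    ∀ x : EuclideanSpace ℝ (Fin n),
      Metric.closedBall x ε ⊆ convexHull ℝ (Set.range v) →
      x ∈ convexHull ℝ (Set.range v') :=
  stmt13_general n v v' ε hε hclose
end

section
/- Let a be a bounded self-adjoint operator on an infinite-dimensional Hilbert space H and let b be a compact positive operator on H with dense range. Set a₁ = a and a₂ = a + b. Then there is no orthogonal projection p of infinite rank and real numbers t₁, t₂ such that p a₁ p = t₁ p and p a₂ p = t₂ p. -/
/-!
If `p a p = t₁ p` and `p (a + b) p = t₂ p`, then `p b p = (t₂ - t₁) p`. When `t₂ ≠ t₁` this makes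
`p` compact, and a compact projection has finite rank. When `t₂ = t₁`, `p b p = 0` with `b ≥ 0`
forces `b p = 0` (write `p b p = (√b p)* (√b p)`), and a positive operator with dense range is
injective, so `p = 0`.
-/

theorem LinearMap.IsSymmetric.ker_eq_bot_of_denseRange {𝕜 E : Type*} [RCLike 𝕜]
    [NormedAddCommGroup E] [InnerProductSpace 𝕜 E] {T : E →ₗ[𝕜] E} (hT : T.IsSymmetric)
    (hd : DenseRange T) : LinearMap.ker T = ⊥ := by
  rw [← hT.orthogonal_range, ← Submodule.orthogonal_closure,
    Submodule.dense_iff_topologicalClosure_eq_top.mp (by rwa [LinearMap.coe_range]),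
    Submodule.top_orthogonal_eq_bot]

theorem mul_eq_zero_of_star_mul_mul_self_eq_zero {A : Type*} [PartialOrder A]
    [NonUnitalNormedRing A] [StarRing A] [CStarRing A] [NormedSpace ℝ A] [SMulCommClass ℝ A A]
    [IsScalarTower ℝ A A] [StarOrderedRing A]
    [NonUnitalContinuousFunctionalCalculus ℝ A IsSelfAdjoint] [NonnegSpectrumClass ℝ A]
    {a : A} (b : A) (ha : 0 ≤ a) (h : star b * a * b = 0) : a * b = 0 := by
  have hsqrt : CFC.sqrt a * b = 0 := by
    simpa [h] using (CFC.norm_star_mul_mul_self_of_nonneg b ha).symm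
  rw [← CFC.sqrt_mul_sqrt_self a ha, mul_assoc, hsqrt, mul_zero]

theorem ContinuousLinearMap.IsPositive.eq_zero_of_star_mul_mul_self_eq_zero {E : Type*}
    [NormedAddCommGroup E] [InnerProductSpace ℂ E] [CompleteSpace E] {b : E →L[ℂ] E}
    (hb : b.IsPositive) (hbd : DenseRange b) {p : E →L[ℂ] E} (h : star p * b * p = 0) :
    p = 0 := by
  have hbp : b * p = 0 :=
    mul_eq_zero_of_star_mul_mul_self_eq_zero p ((nonneg_iff_isPositive b).mpr hb) h
  have hker : LinearMap.ker (b : E →ₗ[ℂ] E) = ⊥ :=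
    hb.isSymmetric.ker_eq_bot_of_denseRange hbd
  ext x
  exact LinearMap.ker_eq_bot'.mp hker (p x) congr($hbp x)

theorem ContinuousLinearMap.IsIdempotentElem.finiteDimensional_range_of_isCompactOperator
    {𝕜 M : Type*} [NontriviallyNormedField 𝕜] [CompleteSpace 𝕜] [AddCommGroup M] [Module 𝕜 M]
    [TopologicalSpace M] [T2Space M] [IsTopologicalAddGroup M] [ContinuousSMul 𝕜 M]
    {p : M →L[𝕜] M} (hp : IsIdempotentElem p) (hpc : IsCompactOperator p) :
    FiniteDimensional 𝕜 p.range := by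
  have hid : (id : p.range → p.range) =
      Set.codRestrict (p ∘ p.range.subtypeL) p.range (fun x => LinearMap.mem_range_self _ _) := by
    funext x
    exact Subtype.ext ((LinearMap.IsIdempotentElem.mem_range_iff
      (ContinuousLinearMap.IsIdempotentElem.toLinearMap hp)).mp x.2).symm
  refine .of_isCompactOperator_id ?_
  rw [hid]
  exact (hpc.comp_clm p.range.subtypeL).codRestrict _
    (ContinuousLinearMap.IsIdempotentElem.isClosed_range hp)

theorem stmt17_general {H : Type*} [NormedAddCommGroup H] [InnerProductSpace ℂ H]
    [CompleteSpace H]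
    (a b : H →L[ℂ] H)
    (hbc : IsCompactOperator (⇑b)) (hbpos : b.IsPositive)
    (hbdr : DenseRange ⇑b) :
    ¬ ∃ (p : H →L[ℂ] H) (t₁ t₂ : ℝ),
        IsIdempotentElem p ∧ IsSelfAdjoint p ∧
        ¬ FiniteDimensional ℂ (LinearMap.range (p : H →ₗ[ℂ] H)) ∧
        p ∘L a ∘L p = (t₁ : ℂ) • p ∧ p ∘L (a + b) ∘L p = (t₂ : ℂ) • p := by
  rintro ⟨p, t₁, t₂, hp, hpsa, hinf, h₁, h₂⟩
  have hpbp : p ∘L b ∘L p = ((t₂ : ℂ) - t₁) • p := by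
    rw [sub_smul, ← h₁, ← h₂, ContinuousLinearMap.add_comp, ContinuousLinearMap.comp_add,
      add_sub_cancel_left]
  by_cases ht : (t₂ : ℂ) - t₁ = 0
  · rw [ht, zero_smul] at hpbp
    have hp0 : p = 0 := hbpos.eq_zero_of_star_mul_mul_self_eq_zero hbdr (by rwa [hpsa.star_eq])
    subst hp0
    exact hinf (by rw [ContinuousLinearMap.toLinearMap_zero, LinearMap.range_zero]; infer_instance)
  · have hpc : IsCompactOperator p := by
      have hc : IsCompactOperator (p ∘L b ∘L p) := (hbc.comp_clm p).clm_comp p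
      rwa [hpbp, FunLike.coe_smul, IsCompactOperator.smul_iff₀ ht] at hc
    exact hinf
      (ContinuousLinearMap.IsIdempotentElem.finiteDimensional_range_of_isCompactOperator hp hpc)

theorem stmt17 {H : Type*} [NormedAddCommGroup H] [InnerProductSpace ℂ H]
    [CompleteSpace H] (hH : ¬ FiniteDimensional ℂ H)
    (a b : H →L[ℂ] H) (hsa : IsSelfAdjoint a)
    (hbc : IsCompactOperator (⇑b)) (hbpos : b.IsPositive)
    (hbdr : DenseRange ⇑b) :
    ¬ ∃ (p : H →L[ℂ] H) (t₁ t₂ : ℝ),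
        IsIdempotentElem p ∧ IsSelfAdjoint p ∧
        ¬ FiniteDimensional ℂ (LinearMap.range (p : H →ₗ[ℂ] H)) ∧
        p ∘L a ∘L p = (t₁ : ℂ) • p ∧ p ∘L (a + b) ∘L p = (t₂ : ℂ) • p :=
  stmt17_general a b hbc hbpos hbdr
end

section
/- Let (η_k)_{k=1}^∞ be an orthonormal basis of a Hilbert space H and define the compact self-adjoint operator c by c η_{2n−1} = (1/n) η_{2n−1} and c η_{2n} = −(1/n) η_{2n} for all n ≥ 1. Let ξ_n = (η_{2n−1} + η_{2n})/√2 and let p be the orthogonal projection onto the closed span of {ξ_n : n ≥ 1}. Then p has infinite rank and p c p = 0. -/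
/-!
The vectors `ξ n` are orthonormal, so the range of `p`, which contains them all, is infinite
dimensional. The operator `c` maps `ξ n` to `(η (2n) - η (2n+1)) / (√2 (n+1))`, which is orthogonal
to every `ξ m`. By continuity `c` maps `range p` into `(range p)ᗮ`, and the latter is the kernel of
the self-adjoint operator `p`.
-/

open Submodule

open scoped InnerProductSpace ComplexConjugate

section

variable {𝕜 E : Type*} [RCLike 𝕜] [NormedAddCommGroup E] [InnerProductSpace 𝕜 E]

theorem Orthonormal.inner_pair_eq {v : ℕ → E} (hv : Orthonormal 𝕜 v) (a b a' b' : 𝕜)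
    (m n : ℕ) :
    ⟪a • v (2 * m) + b • v (2 * m + 1), a' • v (2 * n) + b' • v (2 * n + 1)⟫_𝕜 =
      if m = n then conj a * a' + conj b * b' else 0 := by
  simp only [inner_add_left, inner_add_right, inner_smul_left, inner_smul_right,
    orthonormal_iff_ite.mp hv]
  split_ifs <;> first | omega | ring

theorem Orthonormal.not_finiteDimensional_of_mem {ι : Type*} [Infinite ι] {v : ι → E}
    (hv : Orthonormal 𝕜 v) {K : Submodule 𝕜 E} (hK : ∀ i, v i ∈ K) :
    ¬ FiniteDimensional 𝕜 K := fun _ ↦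
  Module.Finite.not_linearIndependent_of_infinite _
    (LinearIndependent.of_comp K.subtype (v := fun i ↦ (⟨v i, hK i⟩ : K)) hv.linearIndependent)

theorem Submodule.mem_orthogonal_span_of_forall_inner_eq_zero {s : Set E} {x : E}
    (h : ∀ u ∈ s, ⟪u, x⟫_𝕜 = 0) : x ∈ (span 𝕜 s)ᗮ :=
  (isOrtho_span.mpr fun _ hu _ hx ↦ (Set.mem_singleton_iff.mp hx) ▸ h _ hu).symm.le
    (mem_span_singleton_self x)

theorem Submodule.topologicalClosure_span_le_comap {F : Type*} [NormedAddCommGroup F]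
    [NormedSpace 𝕜 F] {s : Set E} (f : E →L[𝕜] F) {S : Submodule 𝕜 F}
    (hS : IsClosed (S : Set F)) (h : ∀ x ∈ s, f x ∈ S) :
    (span 𝕜 s).topologicalClosure ≤ S.comap (f : E →ₗ[𝕜] F) :=
  topologicalClosure_minimal _ (span_le.mpr h) (hS.preimage f.continuous)

end

theorem stmt19_general {H : Type*} [NormedAddCommGroup H] [InnerProductSpace ℂ H]
    [CompleteSpace H]
    (η : ℕ → H) (hη : Orthonormal ℂ η)
    (c : H →L[ℂ] H)
    (hceven : ∀ n : ℕ, c (η (2 * n)) = ((1 : ℂ) / (n + 1)) • η (2 * n))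
    (hcodd : ∀ n : ℕ, c (η (2 * n + 1)) = -((1 : ℂ) / (n + 1)) • η (2 * n + 1))
    (ξ : ℕ → H) (hξ : ∀ n : ℕ, ξ n = (Real.sqrt 2)⁻¹ • (η (2 * n) + η (2 * n + 1)))
    (p : H →L[ℂ] H) (hpsa : IsSelfAdjoint p)
    (hrange : LinearMap.range (p : H →ₗ[ℂ] H) =
      (Submodule.span ℂ (Set.range ξ)).topologicalClosure) :
    ¬ FiniteDimensional ℂ (LinearMap.range (p : H →ₗ[ℂ] H)) ∧ p ∘L c ∘L p = 0 := by
  set K := (span ℂ (Set.range ξ)).topologicalClosure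
  set s : ℂ := (((Real.sqrt 2)⁻¹ : ℝ) : ℂ)
  have hs : conj s * s + conj s * s = 1 := by
    simp only [s, Complex.conj_ofReal]
    norm_cast
    rw [← two_mul, ← mul_inv, Real.mul_self_sqrt zero_le_two]
    norm_num
  have hξs : ∀ n, ξ n = s • η (2 * n) + s • η (2 * n + 1) := fun n ↦ by
    rw [hξ, ← smul_add, Complex.coe_smul]
  have hcξ : ∀ n, c (ξ n) = (s / (n + 1)) • η (2 * n) + (-(s / (n + 1))) • η (2 * n + 1) :=
    fun n ↦ by
      rw [hξs, map_add, map_smul, map_smul, hceven, hcodd]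
      module
  have hξon : Orthonormal ℂ ξ := orthonormal_iff_ite.mpr fun m n ↦ by
    simp only [hξs, hη.inner_pair_eq, hs]
  have hcK : K ≤ Kᗮ.comap (c : H →ₗ[ℂ] H) :=
    topologicalClosure_span_le_comap c (isClosed_orthogonal _) <| by
      rintro _ ⟨n, rfl⟩
      rw [orthogonal_closure]
      refine mem_orthogonal_span_of_forall_inner_eq_zero ?_
      rintro _ ⟨m, rfl⟩
      rw [hξs, hcξ, hη.inner_pair_eq]
      split_ifs <;> ring
  have hker : Kᗮ ≤ LinearMap.ker (p : H →ₗ[ℂ] H) :=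
    hrange ▸ (ContinuousLinearMap.IsStarNormal.orthogonal_range hpsa.isStarNormal).le
  refine ⟨hξon.not_finiteDimensional_of_mem fun n ↦ hrange ▸
    le_topologicalClosure _ (subset_span ⟨n, rfl⟩), ?_⟩
  ext x
  exact hker (hcK (hrange ▸ LinearMap.mem_range_self _ x))

theorem stmt19 {H : Type*} [NormedAddCommGroup H] [InnerProductSpace ℂ H]
    [CompleteSpace H]
    (η : ℕ → H) (hη : Orthonormal ℂ η)
    (hbasis : (Submodule.span ℂ (Set.range η)).topologicalClosure = ⊤)
    (c : H →L[ℂ] H) (hc : IsCompactOperator (⇑c)) (hcsa : IsSelfAdjoint c)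
    (hceven : ∀ n : ℕ, c (η (2 * n)) = ((1 : ℂ) / (n + 1)) • η (2 * n))
    (hcodd : ∀ n : ℕ, c (η (2 * n + 1)) = -((1 : ℂ) / (n + 1)) • η (2 * n + 1))
    (ξ : ℕ → H) (hξ : ∀ n : ℕ, ξ n = (Real.sqrt 2)⁻¹ • (η (2 * n) + η (2 * n + 1)))
    (p : H →L[ℂ] H) (hp : IsIdempotentElem p) (hpsa : IsSelfAdjoint p)
    (hrange : LinearMap.range (p : H →ₗ[ℂ] H) =
      (Submodule.span ℂ (Set.range ξ)).topologicalClosure) :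
    ¬ FiniteDimensional ℂ (LinearMap.range (p : H →ₗ[ℂ] H)) ∧ p ∘L c ∘L p = 0 :=
  stmt19_general η hη c hceven hcodd ξ hξ p hpsa hrange
end
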